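/- Completeness of sketch completion: if CompleteSketch(Ω, G, E) with expansion bound K returns ⊥, then there is no expression e derivable from Ω in at most K production-rule expansions such that e is complete (no non-terminals) and passes all tests in E. -/

import Mathlib

/-- A symbol is either a terminal or a non-terminal. -/
inductive GSym (T N : Type) where
  | term : T → GSym T N
  | nonterm : N → GSym T N

/-- A sketch (or program) is a string of symbols. -/
abbrev Sketch (T N : Type) := List (GSym T N)

/-- A sketch is complete if it contains no non-terminals. -/
def completeSk {T N : Type} (Ω : Sketch T N) : Bool :=
  Ω.all fun s => match s with | .term _ => true | .nonterm _ => false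

/-- A grammar is a finite list of productions N ::= β. -/
abbrev Grammar (T N : Type) := List (N × Sketch T N)

/-- Split a sketch at its first (leftmost) non-terminal. -/
def splitFirst {T N : Type} : Sketch T N → Option (Sketch T N × N × Sketch T N)
  | [] => none
  | .term t :: rest =>
      (splitFirst rest).map fun (pre, n, post) => (.term t :: pre, n, post)
  | .nonterm n :: rest => some ([], n, rest)

/-- All sketches obtained by expanding the first non-terminal by one production. -/
def expansions {T N : Type} [DecidableEq N] (G : Grammar T N) (Ω : Sketch T N) :
    List (Sketch T N) :=
  match splitFirst Ω with
  | none => []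
  | some (pre, n, post) =>
      G.filterMap fun p => if p.1 = n then some (pre ++ p.2 ++ post) else none

/-- Depth-first sketch completion with expansion budget `K`. -/
def CompleteSketch {T N Test : Type} [DecidableEq N] (pass : Sketch T N → Test → Bool)
    (G : Grammar T N) (E : List Test) : Nat → Sketch T N → Option (Sketch T N)
  | K, Ω =>
    if completeSk Ω then
      if E.all (pass Ω) then some Ω else none
    else
      match K with
      | 0 => none
      | K' + 1 =>
          (expansions G Ω).firstM fun Ω' => CompleteSketch pass G E K' Ω'

/-- One-step (leftmost) derivation. -/
def SkStep {T N : Type} [DecidableEq N] (G : Grammar T N) (Ω Ω' : Sketch T N) : Prop :=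
  Ω' ∈ expansions G Ω

/-- `n`-step derivation. -/
inductive Derives {T N : Type} [DecidableEq N] (G : Grammar T N) :
    Nat → Sketch T N → Sketch T N → Prop
  | refl (Ω : Sketch T N) : Derives G 0 Ω Ω
  | step {n : Nat} {Ω Ω' Ω'' : Sketch T N} :
      SkStep G Ω Ω' → Derives G n Ω' Ω'' → Derives G (n + 1) Ω Ω''

/-!
Induct on the derivation, spending one unit of the budget per step. A sketch with an expansion
is incomplete, so the search on it fails only if the search fails on every expansion with the
smaller budget; at the end of the derivation the search sits on a complete sketch, where it
fails exactly when some test fails.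
-/

theorem List.firstM_eq_none {α β : Type} {f : α → Option β} {l : List α}
    (h : l.firstM f = none) : ∀ x ∈ l, f x = none := by
  induction l with
  | nil => simp
  | cons a l ih =>
    cases hfa : f a with
    | some b => simp [List.firstM, hfa] at h
    | none =>
      have hl : l.firstM f = none := by simpa [List.firstM, hfa] using h
      simpa [hfa] using ih hl

section

variable {T N Test : Type}

theorem splitFirst_eq_none_of_completeSk {Ω : Sketch T N} (h : completeSk Ω = true) :
    splitFirst Ω = none := by
  induction Ω with
  | nil => rfl
  | cons a Ω ih =>
    cases a with
    | term t =>
      simp only [completeSk, List.all_cons, Bool.true_and] at h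
      simp [splitFirst, ih h]
    | nonterm n => simp [completeSk] at h

theorem completeSk_eq_false_of_skStep [DecidableEq N] {G : Grammar T N} {Ω Ω' : Sketch T N}
    (hs : SkStep G Ω Ω') : completeSk Ω = false := by
  cases hc : completeSk Ω
  · rfl
  · simp [SkStep, expansions, splitFirst_eq_none_of_completeSk hc] at hs

theorem exists_pass_eq_false_of_completeSketch_eq_none [DecidableEq N]
    {pass : Sketch T N → Test → Bool} {G : Grammar T N} {E : List Test} {K : ℕ}
    {Ω : Sketch T N} (hc : completeSk Ω = true) (h : CompleteSketch pass G E K Ω = none) :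
    ∃ t ∈ E, pass Ω t = false := by
  unfold CompleteSketch at h
  simpa [hc] using h

theorem completeSketch_eq_none_of_skStep [DecidableEq N]
    {pass : Sketch T N → Test → Bool} {G : Grammar T N} {E : List Test} {K : ℕ}
    {Ω Ω' : Sketch T N} (hs : SkStep G Ω Ω') (h : CompleteSketch pass G E (K + 1) Ω = none) :
    CompleteSketch pass G E K Ω' = none := by
  rw [CompleteSketch, if_neg (Bool.eq_false_iff.mp (completeSk_eq_false_of_skStep hs))] at h
  exact List.firstM_eq_none h Ω' hs

end

/-- Completeness of sketch completion: if the search fails, no complete program derivable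
from `Ω` in at most `K` expansions passes all the tests. -/
theorem completeSketch_complete {T N Test : Type} [DecidableEq N]
    (pass : Sketch T N → Test → Bool) (G : Grammar T N) (E : List Test)
    (Ω : Sketch T N) (K : Nat)
    (h : CompleteSketch pass G E K Ω = none) :
    ∀ n ≤ K, ∀ Ω' : Sketch T N, Derives G n Ω Ω' → completeSk Ω' = true →
      ∃ t ∈ E, pass Ω' t = false := by
  intro n hn Ω' hd hc
  induction hd generalizing K with
  | refl => exact exists_pass_eq_false_of_completeSketch_eq_none hc h
  | step hs _ ih =>
    obtain ⟨K, rfl⟩ : ∃ K', K = K' + 1 := ⟨K - 1, by omega⟩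
    exact ih K (completeSketch_eq_none_of_skStep hs h) (by omega) hc
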